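/- For a weak metric f-structure (f, Q, ξ_1, …, ξ_s, η^1, …, η^s, ⟨·,·⟩) on V one has η^i(X) = ⟨X, ξ_i⟩ for all X ∈ V and all i = 1, …, s; consequently ξ_1, …, ξ_s form an orthonormal system, each ξ_i is orthogonal to D = ∩_i ker η^i, and V is the orthogonal direct sum of D and span{ξ_1, …, ξ_s}. -/

import Mathlib

/-!
Everything rests on `f ξ_i = 0`; evaluating the compatibility condition at `Y = ξ_i` then gives
`η^i(X) = ⟨X, ξ_i⟩`, and the rest is bookkeeping. Since `f² = -Q` on `D` and `Q` is injective,
`f` is injective on the `f`-invariant subspace `D`, hence maps `D` onto itself; as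
`rank f = 2n ≤ dim D`, this forces `range f = D`. So `f ξ_i ∈ D ∩ ker f = 0`, because
`f² ξ_i = -ξ_i + ξ_i = 0`.
-/

open scoped RealInnerProductSpace

theorem LinearMap.le_range_of_mapsTo_of_disjoint_ker {K V : Type*} [Field K] [AddCommGroup V]
    [Module K V] [FiniteDimensional K V] {f : V →ₗ[K] V} {W : Submodule K V}
    (hW : ∀ x ∈ W, f x ∈ W) (hker : Disjoint W (LinearMap.ker f)) : W ≤ LinearMap.range f := by
  have hinj : Function.Injective (f.restrict hW) :=
    (injective_iff_map_eq_zero _).mpr fun x hx =>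
      Subtype.ext (LinearMap.disjoint_ker.mp hker x x.2 (congrArg Subtype.val hx))
  intro w hw
  obtain ⟨v, hv⟩ := LinearMap.injective_iff_surjective.mp hinj ⟨w, hw⟩
  exact ⟨v, congrArg Subtype.val hv⟩

theorem LinearMap.range_eq_of_mapsTo_of_disjoint_ker {K V : Type*} [Field K] [AddCommGroup V]
    [Module K V] [FiniteDimensional K V] {f : V →ₗ[K] V} {W : Submodule K V}
    (hW : ∀ x ∈ W, f x ∈ W) (hker : Disjoint W (LinearMap.ker f))
    (hrank : Module.finrank K (LinearMap.range f) ≤ Module.finrank K W) :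
    LinearMap.range f = W :=
  (Submodule.eq_of_le_of_finrank_le (le_range_of_mapsTo_of_disjoint_ker hW hker) hrank).symm

theorem Module.finrank_le_finrank_iInf_ker_add_card {K V ι : Type*} [Field K] [AddCommGroup V]
    [Module K V] [FiniteDimensional K V] [Fintype ι] (η : ι → V →ₗ[K] K) :
    Module.finrank K V ≤ Module.finrank K (⨅ i, LinearMap.ker (η i) : Submodule K V) +
      Fintype.card ι := by
  have h := (LinearMap.pi η).finrank_range_add_finrank_ker
  have hle := (LinearMap.range (LinearMap.pi η)).finrank_le
  rw [LinearMap.ker_pi] at h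
  rw [Module.finrank_fintype_fun_eq_card] at hle
  omega

section Biorthogonal

variable {R V ι : Type*} [CommRing R] [AddCommGroup V] [Module R V] [Fintype ι] [DecidableEq ι]
  {ξ : ι → V} {η : ι → V →ₗ[R] R}

theorem apply_sum_smul_of_biorthogonal (hηξ : ∀ i j, η i (ξ j) = if i = j then 1 else 0)
    (c : ι → R) (k : ι) : η k (∑ i, c i • ξ i) = c k := by
  simp [hηξ]

theorem sub_sum_smul_mem_iInf_ker (hηξ : ∀ i j, η i (ξ j) = if i = j then 1 else 0) (X : V) :
    X - ∑ i, η i X • ξ i ∈ (⨅ i, LinearMap.ker (η i) : Submodule R V) := by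
  simp only [Submodule.mem_iInf, LinearMap.mem_ker, map_sub,
    apply_sum_smul_of_biorthogonal hηξ, sub_self, implies_true]

theorem iInf_ker_sup_span_eq_top (hηξ : ∀ i j, η i (ξ j) = if i = j then 1 else 0) :
    (⨅ i, LinearMap.ker (η i) : Submodule R V) ⊔ Submodule.span R (Set.range ξ) = ⊤ := by
  refine Submodule.eq_top_iff'.mpr fun X => Submodule.mem_sup.mpr
    ⟨_, sub_sum_smul_mem_iInf_ker hηξ X, _, ?_, sub_add_cancel _ _⟩
  exact Submodule.sum_mem _ fun i _ => Submodule.smul_mem _ _ (Submodule.subset_span ⟨i, rfl⟩)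

end Biorthogonal

namespace WeakMetricFStructure

section FStructure

variable {K V ι : Type*} [Field K] [AddCommGroup V] [Module K V] [Fintype ι]
  {f Q : V →ₗ[K] V} {ξ : ι → V} {η : ι → V →ₗ[K] K}

theorem disjoint_iInf_ker_ker_of_sq_eq (hQ : Function.Injective Q)
    (hf2 : ∀ X, f (f X) = -(Q X) + ∑ i, η i X • ξ i) :
    Disjoint (⨅ i, LinearMap.ker (η i) : Submodule K V) (LinearMap.ker f) := by
  refine LinearMap.disjoint_ker.mpr fun X hX hfX => hQ ?_
  simp only [Submodule.mem_iInf, LinearMap.mem_ker] at hX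
  simpa [hfX, hX] using hf2 X

theorem range_eq_iInf_ker_of_sq_eq [FiniteDimensional K V] (hQ : Function.Injective Q)
    (hf2 : ∀ X, f (f X) = -(Q X) + ∑ i, η i X • ξ i)
    (hD : ∀ X, (∀ i, η i X = 0) → ∀ i, η i (f X) = 0)
    (hrank : Module.finrank K (LinearMap.range f) + Fintype.card ι = Module.finrank K V) :
    LinearMap.range f = (⨅ i, LinearMap.ker (η i) : Submodule K V) := by
  refine LinearMap.range_eq_of_mapsTo_of_disjoint_ker (fun X hX => ?_)
    (disjoint_iInf_ker_ker_of_sq_eq hQ hf2) ?_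
  · simp only [Submodule.mem_iInf, LinearMap.mem_ker] at hX ⊢
    exact hD X hX
  · have := Module.finrank_le_finrank_iInf_ker_add_card η
    omega

variable [DecidableEq ι]

theorem apply_apply_xi_eq_zero (hf2 : ∀ X, f (f X) = -(Q X) + ∑ i, η i X • ξ i)
    (hηξ : ∀ i j, η i (ξ j) = if i = j then 1 else 0) (hQξ : ∀ i, Q (ξ i) = ξ i) (j : ι) :
    f (f (ξ j)) = 0 := by
  simp [hf2, hηξ, hQξ]

theorem apply_xi_eq_zero [FiniteDimensional K V] (hQ : Function.Injective Q)
    (hf2 : ∀ X, f (f X) = -(Q X) + ∑ i, η i X • ξ i)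
    (hηξ : ∀ i j, η i (ξ j) = if i = j then 1 else 0) (hQξ : ∀ i, Q (ξ i) = ξ i)
    (hD : ∀ X, (∀ i, η i X = 0) → ∀ i, η i (f X) = 0)
    (hrank : Module.finrank K (LinearMap.range f) + Fintype.card ι = Module.finrank K V)
    (j : ι) : f (ξ j) = 0 := by
  have hmem : f (ξ j) ∈ (⨅ i, LinearMap.ker (η i) : Submodule K V) :=
    range_eq_iInf_ker_of_sq_eq hQ hf2 hD hrank ▸ LinearMap.mem_range_self f (ξ j)
  exact LinearMap.disjoint_ker.mp (disjoint_iInf_ker_ker_of_sq_eq hQ hf2) _ hmem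
    (apply_apply_xi_eq_zero hf2 hηξ hQξ j)

end FStructure

section Metric

variable {V ι : Type*} [NormedAddCommGroup V] [InnerProductSpace ℝ V]
  {f Q : V →ₗ[ℝ] V} {ξ : ι → V} {η : ι → V →ₗ[ℝ] ℝ}

theorem span_range_le_orthogonal_iInf_ker (hη : ∀ i X, η i X = ⟪X, ξ i⟫) :
    Submodule.span ℝ (Set.range ξ) ≤ (⨅ i, LinearMap.ker (η i) : Submodule ℝ V)ᗮ := by
  refine Submodule.span_le.mpr ?_
  rintro _ ⟨i, rfl⟩
  refine (Submodule.mem_orthogonal _ _).mpr fun X hX => ?_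
  rw [← hη]
  exact LinearMap.mem_ker.mp (Submodule.mem_iInf _ |>.mp hX i)

variable [Fintype ι] [DecidableEq ι]

theorem apply_eq_inner_of_apply_xi_eq_zero (hηξ : ∀ i j, η i (ξ j) = if i = j then 1 else 0)
    (hQξ : ∀ i, Q (ξ i) = ξ i) (hmetric : ∀ X Y, ⟪f X, f Y⟫ = ⟪X, Q Y⟫ - ∑ i, η i X * η i Y)
    (hfξ : ∀ i, f (ξ i) = 0) (i : ι) (X : V) : η i X = ⟪X, ξ i⟫ := by
  have h := hmetric X (ξ i)
  simp only [hfξ, inner_zero_right, hQξ, hηξ, mul_ite, mul_one, mul_zero,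
    Finset.sum_ite_eq', Finset.mem_univ, if_true] at h
  linarith

end Metric

end WeakMetricFStructure

theorem weak_metric_f_structure_eta_eq_inner_and_orthogonal_splitting_general
    {V : Type*} [NormedAddCommGroup V] [InnerProductSpace ℝ V] [FiniteDimensional ℝ V]
    (n s : ℕ)
    (hdim : Module.finrank ℝ V = 2 * n + s)
    (f Q : V →ₗ[ℝ] V) (ξ : Fin s → V) (η : Fin s → V →ₗ[ℝ] ℝ)
    (hQ : Function.Bijective Q)
    (hrank : Module.finrank ℝ (LinearMap.range f) = 2 * n)
    (hf2 : ∀ X, f (f X) = -(Q X) + ∑ i, η i X • ξ i)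
    (hηξ : ∀ i j, η i (ξ j) = if i = j then (1 : ℝ) else 0)
    (hQξ : ∀ i, Q (ξ i) = ξ i)
    (hD : ∀ X, (∀ i, η i X = 0) → ∀ i, η i (f X) = 0)
    (hmetric : ∀ X Y, ⟪f X, f Y⟫ = ⟪X, Q Y⟫ - ∑ i, η i X * η i Y) :
    (∀ i X, η i X = ⟪X, ξ i⟫) ∧
    (∀ i j, ⟪ξ i, ξ j⟫ = if i = j then (1 : ℝ) else 0) ∧
    (∀ X ∈ (⨅ i, LinearMap.ker (η i) : Submodule ℝ V), ∀ i, ⟪X, ξ i⟫ = 0) ∧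
    ((⨅ i, LinearMap.ker (η i) : Submodule ℝ V) ⊔ Submodule.span ℝ (Set.range ξ) = ⊤) ∧
    (∀ X ∈ (⨅ i, LinearMap.ker (η i) : Submodule ℝ V),
      ∀ Y ∈ Submodule.span ℝ (Set.range ξ), ⟪X, Y⟫ = 0) := by
  have hfξ : ∀ i, f (ξ i) = 0 :=
    WeakMetricFStructure.apply_xi_eq_zero hQ.injective hf2 hηξ hQξ hD
      (by rw [hrank, hdim, Fintype.card_fin])
  have hη : ∀ i X, η i X = ⟪X, ξ i⟫ :=
    WeakMetricFStructure.apply_eq_inner_of_apply_xi_eq_zero hηξ hQξ hmetric hfξ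
  have hDperp := WeakMetricFStructure.span_range_le_orthogonal_iInf_ker hη
  refine ⟨hη, fun i j => ?_, fun X hX i => ?_, iInf_ker_sup_span_eq_top hηξ,
    fun X hX Y hY => Submodule.inner_right_of_mem_orthogonal hX (hDperp hY)⟩
  · rw [← hη, hηξ]
    exact if_congr eq_comm rfl rfl
  · exact Submodule.inner_right_of_mem_orthogonal hX (hDperp (Submodule.subset_span ⟨i, rfl⟩))

/-- For a weak metric f-structure `(f, Q, ξ_i, η^i, g)` on a real inner product space `V`
of dimension `2n+s`: `η^i(X) = ⟨X, ξ_i⟩`, the `ξ_i` are orthonormal, each `ξ_i` is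
orthogonal to `D = ⋂_i ker η^i`, and `V` is the orthogonal direct sum of `D`
and `span{ξ_1, …, ξ_s}`. -/
theorem weak_metric_f_structure_eta_eq_inner_and_orthogonal_splitting
    {V : Type*} [NormedAddCommGroup V] [InnerProductSpace ℝ V] [FiniteDimensional ℝ V]
    (n s : ℕ) (hn : 1 ≤ n) (hs : 1 ≤ s)
    (hdim : Module.finrank ℝ V = 2 * n + s)
    (f Q : V →ₗ[ℝ] V) (ξ : Fin s → V) (η : Fin s → V →ₗ[ℝ] ℝ)
    (hQ : Function.Bijective Q)
    (hrank : Module.finrank ℝ (LinearMap.range f) = 2 * n)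
    (hf2 : ∀ X, f (f X) = -(Q X) + ∑ i, η i X • ξ i)
    (hηξ : ∀ i j, η i (ξ j) = if i = j then (1 : ℝ) else 0)
    (hQξ : ∀ i, Q (ξ i) = ξ i)
    (hD : ∀ X, (∀ i, η i X = 0) → ∀ i, η i (f X) = 0)
    (hmetric : ∀ X Y, ⟪f X, f Y⟫ = ⟪X, Q Y⟫ - ∑ i, η i X * η i Y) :
    (∀ i X, η i X = ⟪X, ξ i⟫) ∧
    (∀ i j, ⟪ξ i, ξ j⟫ = if i = j then (1 : ℝ) else 0) ∧
    (∀ X ∈ (⨅ i, LinearMap.ker (η i) : Submodule ℝ V), ∀ i, ⟪X, ξ i⟫ = 0) ∧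
    ((⨅ i, LinearMap.ker (η i) : Submodule ℝ V) ⊔ Submodule.span ℝ (Set.range ξ) = ⊤) ∧
    (∀ X ∈ (⨅ i, LinearMap.ker (η i) : Submodule ℝ V),
      ∀ Y ∈ Submodule.span ℝ (Set.range ξ), ⟪X, Y⟫ = 0) :=
  weak_metric_f_structure_eta_eq_inner_and_orthogonal_splitting_general n s hdim f Q ξ η hQ hrank
    hf2 hηξ hQξ hD hmetric
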